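/- Suppose f satisfies (a)–(d) and in addition f'(0) = 0. Then |f'(b)| ≥ 2, and |f'(b)| > 2 unless f(z) = e^{iα} z² on D for some real α. -/

import Mathlib

/-!
Since `f 0 = 0` and `f' 0 = 0`, two applications of the Schwarz lemma give `f z = z² g z` with
`g` a holomorphic map of the disk into the closed disk. Composing `g` with the disk automorphism
sending `g 0` to `0` and applying the Schwarz lemma once more (Schwarz–Pick) bounds
`‖g z‖ ≤ (a + ‖z‖) / (1 + a ‖z‖)`, where `a = ‖g 0‖`. Along the radius ending at `b` this gives
`‖f (r b) - f b‖ ≥ 1 - r² ‖g (r b)‖ ≥ (1 - r) (1 + r + r² + a r) / (1 + a r)`, so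
`‖f' b‖ ≥ (3 + a) / (1 + a) ≥ 2`, strictly unless `a = 1`; and if `a = 1` the maximum modulus
principle makes `g` a unimodular constant.
-/

open Complex Filter Metric Set
open scoped ComplexConjugate Topology

noncomputable def blaschkeFactor (c w : ℂ) : ℂ := (w - c) / (1 - conj c * w)

lemma norm_one_sub_conj_mul_sq_sub_norm_sub_sq (c w : ℂ) :
    ‖1 - conj c * w‖ ^ 2 - ‖w - c‖ ^ 2 = (1 - ‖c‖ ^ 2) * (1 - ‖w‖ ^ 2) := by
  simp only [Complex.sq_norm, normSq_apply, sub_re, sub_im, mul_re, mul_im, one_re, one_im,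
    conj_re, conj_im]
  ring

lemma one_sub_norm_mul_le_norm_one_sub_conj_mul (c w : ℂ) :
    1 - ‖c‖ * ‖w‖ ≤ ‖1 - conj c * w‖ := by
  simpa using norm_sub_norm_le (1 : ℂ) (conj c * w)

lemma norm_sub_le_norm_one_sub_conj_mul {c w : ℂ} (hc : ‖c‖ ≤ 1) (hw : ‖w‖ ≤ 1) :
    ‖w - c‖ ≤ ‖1 - conj c * w‖ := by
  have hid := norm_one_sub_conj_mul_sq_sub_norm_sub_sq c w
  have : 0 ≤ (1 - ‖c‖ ^ 2) * (1 - ‖w‖ ^ 2) := by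
    apply mul_nonneg <;> nlinarith [norm_nonneg c, norm_nonneg w]
  exact (pow_le_pow_iff_left₀ (norm_nonneg _) (norm_nonneg _) two_ne_zero).mp (by linarith)

lemma one_sub_conj_mul_ne_zero {c w : ℂ} (hc : ‖c‖ < 1) (hw : ‖w‖ ≤ 1) :
    1 - conj c * w ≠ 0 := by
  refine norm_pos_iff.mp (lt_of_lt_of_le ?_ (one_sub_norm_mul_le_norm_one_sub_conj_mul c w))
  nlinarith [norm_nonneg c, norm_nonneg w]

lemma blaschkeFactor_self (c : ℂ) : blaschkeFactor c c = 0 := by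
  simp [blaschkeFactor]

lemma norm_blaschkeFactor_le_one {c w : ℂ} (hc : ‖c‖ < 1) (hw : ‖w‖ ≤ 1) :
    ‖blaschkeFactor c w‖ ≤ 1 := by
  rw [blaschkeFactor, norm_div]
  exact div_le_one_of_le₀ (norm_sub_le_norm_one_sub_conj_mul hc.le hw) (norm_nonneg _)

lemma differentiableOn_blaschkeFactor {c : ℂ} (hc : ‖c‖ < 1) :
    DifferentiableOn ℂ (blaschkeFactor c) (closedBall 0 1) := by
  refine (differentiableOn_id.sub_const c).div (by fun_prop) fun w hw => ?_
  exact one_sub_conj_mul_ne_zero hc (by simpa using hw)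

/-- If the pseudo-hyperbolic distance from `w` to `c` is at most `s`, so is the one from `‖w‖`
to `‖c‖`. -/
lemma norm_mul_one_add_le_of_norm_sub_le {c w : ℂ} {s : ℝ} (hc : ‖c‖ ≤ 1) (hw : ‖w‖ ≤ 1)
    (hs₀ : 0 ≤ s) (hs₁ : s ≤ 1) (h : ‖w - c‖ ≤ s * ‖1 - conj c * w‖) :
    ‖w‖ * (1 + ‖c‖ * s) ≤ ‖c‖ + s := by
  have hid := norm_one_sub_conj_mul_sq_sub_norm_sub_sq c w
  have hlow := one_sub_norm_mul_le_norm_one_sub_conj_mul c w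
  have hnn : 0 ≤ 1 - ‖c‖ * ‖w‖ := by nlinarith [norm_nonneg c, norm_nonneg w]
  have hsq : ‖w - c‖ ^ 2 ≤ s ^ 2 * ‖1 - conj c * w‖ ^ 2 := by
    rw [← mul_pow]; exact pow_le_pow_left₀ (norm_nonneg _) h 2
  have : (‖w‖ - ‖c‖) ^ 2 ≤ (s * (1 - ‖c‖ * ‖w‖)) ^ 2 := by
    have hX : (1 - ‖c‖ * ‖w‖) ^ 2 ≤ ‖1 - conj c * w‖ ^ 2 := pow_le_pow_left₀ hnn hlow 2
    have hs : 0 ≤ 1 - s ^ 2 := by nlinarith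
    nlinarith [mul_le_mul_of_nonneg_left hX hs]
  nlinarith [abs_le_of_sq_le_sq' this (mul_nonneg hs₀ hnn)]

theorem norm_mul_one_add_le_of_mapsTo_ball {g : ℂ → ℂ} (hd : DifferentiableOn ℂ g (ball 0 1))
    (hmaps : MapsTo g (ball 0 1) (closedBall 0 1)) {z : ℂ} (hz : z ∈ ball 0 1) :
    ‖g z‖ * (1 + ‖g 0‖ * ‖z‖) ≤ ‖g 0‖ + ‖z‖ := by
  have hgz : ‖g z‖ ≤ 1 := by simpa using hmaps hz
  have hg0 : ‖g 0‖ ≤ 1 := by simpa using hmaps (mem_ball_self one_pos)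
  have hz1 : ‖z‖ < 1 := by simpa using hz
  rcases hg0.lt_or_eq with hlt | heq
  · have hψ : ‖blaschkeFactor (g 0) (g z)‖ ≤ ‖z‖ := by
      refine norm_le_norm_of_mapsTo_ball (f := blaschkeFactor (g 0) ∘ g) ?_ ?_ ?_ hz1
      · exact (differentiableOn_blaschkeFactor hlt).comp hd hmaps
      · exact fun w hw => by
          simpa using norm_blaschkeFactor_le_one hlt (by simpa using hmaps hw)
      · exact blaschkeFactor_self _
    rw [blaschkeFactor, norm_div,
      div_le_iff₀ (norm_pos_iff.mpr (one_sub_conj_mul_ne_zero hlt hgz))] at hψ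
    exact norm_mul_one_add_le_of_norm_sub_le hg0 hgz (norm_nonneg z) hz1.le hψ
  · rw [heq]
    nlinarith [norm_nonneg z]

lemma eq_sq_mul_dslope_dslope {f : ℂ → ℂ} (h₀ : f 0 = 0) (h₀' : deriv f 0 = 0) (z : ℂ) :
    f z = z ^ 2 * dslope (dslope f 0) 0 z := by
  have h₁ := sub_smul_dslope f 0 z
  have h₂ := sub_smul_dslope (dslope f 0) 0 z
  rw [dslope_same, h₀'] at h₂
  simp only [sub_zero, smul_eq_mul, h₀] at h₁ h₂
  rw [← h₁, ← h₂]
  ring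

lemma mapsTo_dslope_zero_of_mapsTo_ball {f : ℂ → ℂ} (hd : DifferentiableOn ℂ f (ball 0 1))
    (hmaps : MapsTo f (ball 0 1) (closedBall 0 1)) (h₀ : f 0 = 0) :
    MapsTo (dslope f 0) (ball 0 1) (closedBall 0 1) := fun z hz => by
  simpa using norm_dslope_le_div_of_mapsTo_ball hd (by rwa [h₀]) hz

theorem exists_eq_sq_mul_of_mapsTo_ball {f : ℂ → ℂ} (hd : DifferentiableOn ℂ f (ball 0 1))
    (hmaps : MapsTo f (ball 0 1) (closedBall 0 1)) (h₀ : f 0 = 0) (h₀' : deriv f 0 = 0) :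
    ∃ g : ℂ → ℂ, DifferentiableOn ℂ g (ball 0 1) ∧ MapsTo g (ball 0 1) (closedBall 0 1) ∧
      ∀ z, f z = z ^ 2 * g z := by
  have hnhds : ball (0 : ℂ) 1 ∈ 𝓝 0 := ball_mem_nhds 0 one_pos
  have hd₁ : DifferentiableOn ℂ (dslope f 0) (ball 0 1) := (differentiableOn_dslope hnhds).mpr hd
  refine ⟨dslope (dslope f 0) 0, (differentiableOn_dslope hnhds).mpr hd₁,
    mapsTo_dslope_zero_of_mapsTo_ball hd₁ (mapsTo_dslope_zero_of_mapsTo_ball hd hmaps h₀) ?_,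
    eq_sq_mul_dslope_dslope h₀ h₀'⟩
  rw [dslope_same, h₀']

lemma exists_eqOn_exp_of_norm_eq_one {g : ℂ → ℂ} (hd : DifferentiableOn ℂ g (ball 0 1))
    (hmaps : MapsTo g (ball 0 1) (closedBall 0 1)) (h : ‖g 0‖ = 1) :
    ∃ θ : ℝ, EqOn g (fun _ => exp (θ * I)) (ball 0 1) := by
  obtain ⟨θ, hθ⟩ := (norm_eq_one_iff (g 0)).mp h
  refine ⟨θ, fun z hz => ?_⟩
  rw [hθ]
  exact eqOn_of_isPreconnected_of_isMaxOn_norm (convex_ball (0 : ℂ) 1).isPreconnected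
    isOpen_ball hd (mem_ball_self one_pos)
    (isMaxOn_iff.mpr fun w hw => by simpa [h] using hmaps hw) hz

lemma tendsto_ofReal_mul_nhdsWithin_ball {b : ℂ} (hb : ‖b‖ = 1) :
    Tendsto (fun r : ℝ => (r : ℂ) * b) (𝓝[<] 1) (𝓝[ball 0 1] b) := by
  refine tendsto_nhdsWithin_iff.mpr ⟨?_, ?_⟩
  · exact tendsto_nhdsWithin_of_tendsto_nhds (Continuous.tendsto' (by fun_prop) 1 b (by simp))
  · filter_upwards [Ioo_mem_nhdsLT (zero_lt_one' ℝ)] with r hr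
    simpa [hb, abs_of_pos hr.1] using hr.2

theorem le_norm_of_tendsto_slope_of_radial_bound {f : ℂ → ℂ} {b L : ℂ} {p : ℝ → ℝ}
    (hb : ‖b‖ = 1) (hL : Tendsto (fun z => (f z - f b) / (z - b)) (𝓝[ball 0 1] b) (𝓝 L))
    (hp : ContinuousAt p 1)
    (hbound : ∀ r ∈ Ioo (0 : ℝ) 1, (1 - r) * p r ≤ ‖f b‖ - ‖f (r * b)‖) :
    p 1 ≤ ‖L‖ := by
  refine le_of_tendsto_of_tendsto (hp.tendsto.mono_left nhdsWithin_le_nhds)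
    ((hL.comp (tendsto_ofReal_mul_nhdsWithin_ball hb)).norm) ?_
  filter_upwards [Ioo_mem_nhdsLT (zero_lt_one' ℝ)] with r hr
  have hdist : ‖(r : ℂ) * b - b‖ = 1 - r := by
    rw [← sub_one_mul, norm_mul, hb, mul_one, ← ofReal_one, ← ofReal_sub, norm_real,
      Real.norm_of_nonpos (by linarith [hr.2])]
    ring
  rw [Function.comp_apply, norm_div, hdist, le_div_iff₀ (by linarith [hr.2]), mul_comm]
  calc (1 - r) * p r ≤ ‖f b‖ - ‖f (r * b)‖ := hbound r hr
    _ ≤ ‖f (r * b) - f b‖ := by rw [norm_sub_rev]; exact norm_sub_norm_le _ _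

theorem boundary_schwarz_second_order_general
    (f : ℂ → ℂ) (b fb' : ℂ)
    (ha : DifferentiableOn ℂ f {z : ℂ | ‖z‖ < 1})
    (hb : ∀ z : ℂ, ‖z‖ < 1 → ‖f z‖ < 1)
    (hc : f 0 = 0)
    (hbmod : ‖b‖ = 1)
    (hfb : ‖f b‖ = 1)
    (hderiv : Tendsto (fun z => (f z - f b) / (z - b))
      (nhdsWithin b {z : ℂ | ‖z‖ < 1}) (nhds fb'))
    (hd0 : deriv f 0 = 0) :
    2 ≤ ‖fb'‖ ∧
      ((¬ ∃ α : ℝ, ∀ z : ℂ, ‖z‖ < 1 →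
          f z = Complex.exp (α * Complex.I) * z ^ 2) →
        2 < ‖fb'‖) := by
  rw [← ball_zero_eq] at ha hderiv
  obtain ⟨g, hgd, hgmaps, hfg⟩ := exists_eq_sq_mul_of_mapsTo_ball ha
    (fun z hz => by simpa using (hb z (by simpa using hz)).le) hc hd0
  have hg₀ : ‖g 0‖ ≤ 1 := by simpa using hgmaps (mem_ball_self one_pos)
  have hbound : (3 + ‖g 0‖) / (1 + ‖g 0‖) ≤ ‖fb'‖ := by
    have hp : ContinuousAt (fun r : ℝ => (1 + r + r ^ 2 + ‖g 0‖ * r) / (1 + ‖g 0‖ * r)) 1 :=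
      ContinuousAt.div (by fun_prop) (by fun_prop) (by positivity)
    convert le_norm_of_tendsto_slope_of_radial_bound hbmod hderiv hp ?_ using 1
    · ring
    rintro r ⟨hr₀, hr₁⟩
    have hrb : ‖(r : ℂ) * b‖ = r := by simp [hbmod, abs_of_pos hr₀]
    have hm := norm_mul_one_add_le_of_mapsTo_ball hgd hgmaps (mem_ball_zero_iff.mpr (hrb ▸ hr₁))
    rw [hrb] at hm
    rw [hfb, hfg, norm_mul, norm_pow, hrb, mul_div_assoc', div_le_iff₀ (by positivity)]
    nlinarith [mul_le_mul_of_nonneg_left hm (sq_nonneg r)]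
  refine ⟨le_trans ((le_div_iff₀ (by positivity)).mpr (by linarith)) hbound, fun hne => ?_⟩
  have hg₀' : ‖g 0‖ < 1 := by
    refine hg₀.lt_of_ne fun hg₀_eq => hne ?_
    obtain ⟨θ, hθ⟩ := exists_eqOn_exp_of_norm_eq_one hgd hgmaps hg₀_eq
    exact ⟨θ, fun z hz => by rw [hfg, hθ (mem_ball_zero_iff.mpr hz), mul_comm]⟩
  exact lt_of_lt_of_le ((lt_div_iff₀ (by positivity)).mpr (by linarith)) hbound

/-- If `f` satisfies (a)–(d) and moreover `f'(0) = 0`, then `|f'(b)| ≥ 2`, and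
`|f'(b)| > 2` unless `f z = e^{iα} z²` on the disk for some real `α`. -/
theorem boundary_schwarz_second_order
    (f : ℂ → ℂ) (b fb' : ℂ)
    (ha : DifferentiableOn ℂ f {z : ℂ | ‖z‖ < 1})
    (hb : ∀ z : ℂ, ‖z‖ < 1 → ‖f z‖ < 1)
    (hc : f 0 = 0)
    (hbmod : ‖b‖ = 1)
    (hcont : ContinuousWithinAt f ({z : ℂ | ‖z‖ < 1} ∪ {b}) b)
    (hfb : ‖f b‖ = 1)
    (hderiv : Tendsto (fun z => (f z - f b) / (z - b))
      (nhdsWithin b {z : ℂ | ‖z‖ < 1}) (nhds fb'))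
    (hd0 : deriv f 0 = 0) :
    2 ≤ ‖fb'‖ ∧
      ((¬ ∃ α : ℝ, ∀ z : ℂ, ‖z‖ < 1 →
          f z = Complex.exp (α * Complex.I) * z ^ 2) →
        2 < ‖fb'‖) :=
  boundary_schwarz_second_order_general f b fb' ha hb hc hbmod hfb hderiv hd0
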